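/- Let a, b1, b2 be real numbers and c1, c2 > 0. Then for all real x, y with |x| + |y| < 1, one has F2(a; b1, b2; c1, c2; x, y) = Σ_{i=0}^∞ [(a)_i (b1)_i (b2)_i / ((c1)_i (c2)_i i!)] x^i y^i F(a+i, b1+i; c1+i; x) F(a+i, b2+i; c2+i; y), where all the series occurring converge absolutely. -/

import Mathlib

open scoped BigOperators
open Filter Set

/-- Pochhammer symbol `(a)_n = a (a+1) ⋯ (a+n-1)`. -/
noncomputable def poch (a : ℝ) (n : ℕ) : ℝ := ∏ k ∈ Finset.range n, (a + k)

/-- Gauss hypergeometric series `F(a,b;c;z)`. -/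
noncomputable def gaussF (a b c z : ℝ) : ℝ :=
  ∑' n : ℕ, poch a n * poch b n / (poch c n * (Nat.factorial n : ℝ)) * z ^ n

/-- Appell hypergeometric series `F2(a;b1,b2;c1,c2;x,y)`. -/
noncomputable def appellF2 (a b1 b2 c1 c2 x y : ℝ) : ℝ :=
  ∑' p : ℕ × ℕ, poch a (p.1 + p.2) * poch b1 p.1 * poch b2 p.2 /
    (poch c1 p.1 * poch c2 p.2 * (Nat.factorial p.1 : ℝ) * (Nat.factorial p.2 : ℝ)) *
    x ^ p.1 * y ^ p.2

noncomputable def k1 (α β : ℝ) : ℝ :=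
  2 ^ (2*α + 2*β) * Real.Gamma α * Real.Gamma β * Real.Gamma (α + β) /
    (4 * Real.pi * Real.Gamma (2*α) * Real.Gamma (2*β))

noncomputable def k2 (α β : ℝ) : ℝ :=
  2 ^ (2 - 2*α + 2*β) * Real.Gamma (1-α) * Real.Gamma β * Real.Gamma (1-α+β) /
    (4 * Real.pi * Real.Gamma (2-2*α) * Real.Gamma (2*β))

noncomputable def k3 (α β : ℝ) : ℝ :=
  2 ^ (2 + 2*α - 2*β) * Real.Gamma α * Real.Gamma (1-β) * Real.Gamma (1+α-β) /
    (4 * Real.pi * Real.Gamma (2*α) * Real.Gamma (2-2*β))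

noncomputable def k4 (α β : ℝ) : ℝ :=
  2 ^ (4 - 2*α - 2*β) * Real.Gamma (1-α) * Real.Gamma (1-β) * Real.Gamma (2-α-β) /
    (4 * Real.pi * Real.Gamma (2-2*α) * Real.Gamma (2-2*β))

/-- First fundamental solution `q1` of `H⁰_{α,β}`. -/
noncomputable def q1 (α β x y x0 y0 : ℝ) : ℝ :=
  let rr := (x - x0)^2 + (y - y0)^2
  let r1 := (x + x0)^2 + (y - y0)^2
  let r2 := (x - x0)^2 + (y + y0)^2
  let σ1 := 1 - rr / r1
  let σ2 := 1 - rr / r2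
  k1 α β * r1 ^ (-α) * r2 ^ (-β) *
    ∑' i : ℕ, poch (α+β) i * poch α i * poch β i /
      (poch (2*α) i * poch (2*β) i * (Nat.factorial i : ℝ)) * (σ1 * σ2) ^ i *
      gaussF (α-β) (α+i) (2*α+i) σ1 * gaussF (β-α) (β+i) (2*β+i) σ2

/-- Second fundamental solution `q2` of `H⁰_{α,β}`. -/
noncomputable def q2 (α β x y x0 y0 : ℝ) : ℝ :=
  let rr := (x - x0)^2 + (y - y0)^2
  let r1 := (x + x0)^2 + (y - y0)^2
  let r2 := (x - x0)^2 + (y + y0)^2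
  let σ1 := 1 - rr / r1
  let σ2 := 1 - rr / r2
  k2 α β * (x * x0) ^ (1-2*α) * r1 ^ (α-1) * r2 ^ (-β) *
    ∑' i : ℕ, poch (1-α+β) i * poch (1-α) i * poch β i /
      (poch (2-2*α) i * poch (2*β) i * (Nat.factorial i : ℝ)) * (σ1 * σ2) ^ i *
      gaussF (1-α-β) (1-α+i) (2-2*α+i) σ1 * gaussF (α+β-1) (β+i) (2*β+i) σ2

/-- Third fundamental solution `q3` of `H⁰_{α,β}`. -/
noncomputable def q3 (α β x y x0 y0 : ℝ) : ℝ :=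
  let rr := (x - x0)^2 + (y - y0)^2
  let r1 := (x + x0)^2 + (y - y0)^2
  let r2 := (x - x0)^2 + (y + y0)^2
  let σ1 := 1 - rr / r1
  let σ2 := 1 - rr / r2
  k3 α β * (y * y0) ^ (1-2*β) * r1 ^ (-α) * r2 ^ (β-1) *
    ∑' i : ℕ, poch (1+α-β) i * poch α i * poch (1-β) i /
      (poch (2*α) i * poch (2-2*β) i * (Nat.factorial i : ℝ)) * (σ1 * σ2) ^ i *
      gaussF (α+β-1) (α+i) (2*α+i) σ1 * gaussF (1-α-β) (1-β+i) (2-2*β+i) σ2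

/-- Fourth fundamental solution `q4` of `H⁰_{α,β}`. -/
noncomputable def q4 (α β x y x0 y0 : ℝ) : ℝ :=
  let rr := (x - x0)^2 + (y - y0)^2
  let r1 := (x + x0)^2 + (y - y0)^2
  let r2 := (x - x0)^2 + (y + y0)^2
  let σ1 := 1 - rr / r1
  let σ2 := 1 - rr / r2
  k4 α β * (x * x0) ^ (1-2*α) * (y * y0) ^ (1-2*β) * r1 ^ (α-1) * r2 ^ (β-1) *
    ∑' i : ℕ, poch (2-α-β) i * poch (1-α) i * poch (1-β) i /
      (poch (2-2*α) i * poch (2-2*β) i * (Nat.factorial i : ℝ)) * (σ1 * σ2) ^ i *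
      gaussF (β-α) (1-α+i) (2-2*α+i) σ1 * gaussF (α-β) (1-β+i) (2-2*β+i) σ2

/-!
Write `(a)_(M+N) = (a)_M (a + M)_N` and expand `(a + M)_N` by Newton's forward-difference
formula as `∑ i, C(M, i) N!/(N - i)! (a + i)_(N - i)`. Substituting `M = i + m`, `N = i + n`
turns the double series of `F2` into a triple series over `(i, m, n)` whose `(m, n)`-sum for
fixed `i` is the product of the `i`-th coefficient with the two Gauss series.

All rearrangements are justified by absolute convergence. For nonnegative parameters the split
series has nonnegative terms adding up to the `F2` series at `(|x|, |y|)`, which is dominated,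
through `(A)_(M+N) ≤ C(M+N, M) (A)_M (A)_N` for `A ≥ 1` and `C(M+N, M) s^M t^N ≤ (s+t)^(M+N)`,
by a product of two Gauss series at `|x| + |y| < 1`; these converge by the ratio test.
-/

open scoped Nat Topology fwdDiff

lemma poch_succ (a : ℝ) (n : ℕ) : poch a (n + 1) = poch a n * (a + n) :=
  Finset.prod_range_succ _ _

lemma poch_succ' (a : ℝ) (n : ℕ) : poch a (n + 1) = a * poch (a + 1) n := by
  simp only [poch, Finset.prod_range_succ', Nat.cast_succ, Nat.cast_zero, add_zero, add_assoc,
    add_comm (1 : ℝ), mul_comm a]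

lemma poch_add (a : ℝ) (m n : ℕ) : poch a (m + n) = poch a m * poch (a + m) n := by
  induction n with
  | zero => simp [poch]
  | succ n ih => rw [← add_assoc, poch_succ, ih, poch_succ]; push_cast; ring

lemma poch_pos {c : ℝ} (hc : 0 < c) (n : ℕ) : 0 < poch c n :=
  Finset.prod_pos fun _ _ => by positivity

lemma poch_nonneg {a : ℝ} (ha : 0 ≤ a) (n : ℕ) : 0 ≤ poch a n :=
  Finset.prod_nonneg fun _ _ => by positivity

lemma poch_le_poch {a b : ℝ} (ha : 0 ≤ a) (hab : a ≤ b) (n : ℕ) : poch a n ≤ poch b n :=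
  Finset.prod_le_prod (fun _ _ => by positivity) fun _ _ => by linarith

lemma abs_poch_le (a : ℝ) (n : ℕ) : |poch a n| ≤ poch |a| n := by
  rw [poch, poch, Finset.abs_prod]
  exact Finset.prod_le_prod (fun _ _ => abs_nonneg _) fun k _ =>
    (abs_add_le a k).trans_eq (by rw [Nat.abs_cast])

lemma poch_add_mul_factorial_le {a : ℝ} (ha : 1 ≤ a) (m n : ℕ) :
    poch a (m + n) * (m ! * n !) ≤ poch a m * poch a n * (m + n)! := by
  have ha0 : 0 ≤ a := zero_le_one.trans ha
  induction n with
  | zero => simp [poch]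
  | succ n ih =>
    have hstep : (a + (m + n : ℕ)) * (n + 1) ≤ (a + n) * ((m + n : ℕ) + 1) := by
      push_cast; nlinarith [(m.cast_nonneg : (0 : ℝ) ≤ m)]
    calc poch a (m + (n + 1)) * (m ! * (n + 1)!)
        = poch a (m + n) * (m ! * n !) * ((a + (m + n : ℕ)) * (n + 1)) := by
          rw [← add_assoc, poch_succ, Nat.factorial_succ]; push_cast; ring
      _ ≤ poch a m * poch a n * (m + n)! * ((a + n) * ((m + n : ℕ) + 1)) := by
          have := poch_nonneg ha0 m
          have := poch_nonneg ha0 n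
          exact mul_le_mul ih hstep (by positivity) (by positivity)
      _ = poch a m * poch a (n + 1) * (m + (n + 1))! := by
          rw [← add_assoc, poch_succ, Nat.factorial_succ (m + n)]; push_cast; ring

lemma poch_add_le_choose_mul {a : ℝ} (ha : 1 ≤ a) (m n : ℕ) :
    poch a (m + n) ≤ (m + n).choose m * poch a m * poch a n := by
  have hfac : 0 < (m ! * n ! : ℝ) := by positivity
  refine le_of_mul_le_mul_right ?_ hfac
  calc poch a (m + n) * (m ! * n !) ≤ poch a m * poch a n * (m + n)! :=
        poch_add_mul_factorial_le ha m n
    _ = (m + n).choose m * poch a m * poch a n * (m ! * n !) := by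
        rw [Nat.choose_symm_add, ← Nat.add_choose_mul_factorial_mul_factorial m n]
        push_cast
        ring

lemma fwdDiff_poch (n : ℕ) :
    Δ_[1] (fun z : ℝ => poch z n) = fun z => n * poch (z + 1) (n - 1) := by
  ext z
  cases n with
  | zero => simp [fwdDiff, poch]
  | succ n => rw [fwdDiff, poch_succ, poch_succ']; push_cast; ring

lemma fwdDiff_iter_poch (n k : ℕ) :
    Δ_[1] ^[k] (fun z : ℝ => poch z n) = fun z => n.descFactorial k * poch (z + k) (n - k) := by
  induction k with
  | zero => simp
  | succ k ih =>
    rw [Function.iterate_succ_apply', ih]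
    ext z
    have h := congrFun (fwdDiff_poch (n - k)) (z + k)
    simp only [fwdDiff, Nat.sub_sub] at h ⊢
    rw [Nat.descFactorial_succ, Nat.cast_mul, Nat.cast_succ, show z + 1 + k = z + k + 1 by ring,
      ← add_assoc]
    linear_combination (n.descFactorial k : ℝ) * h

/-- Newton's forward-difference formula for `z ↦ (z)_n`. -/
lemma sum_choose_mul_descFactorial_mul_poch (a : ℝ) (m n : ℕ) :
    ∑ k ∈ Finset.range (m + 1), (m.choose k * n.descFactorial k : ℝ) * poch (a + k) (n - k) =
      poch (a + m) n := by
  have := shift_eq_sum_fwdDiff_iter (1 : ℝ) (fun z : ℝ => poch z n) m a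
  simp only [fwdDiff_iter_poch, nsmul_eq_mul, mul_one] at this
  rw [this]
  exact Finset.sum_congr rfl fun k _ => by ring

noncomputable def gaussTerm (a b c z : ℝ) (n : ℕ) : ℝ :=
  poch a n * poch b n / (poch c n * n !) * z ^ n

lemma gaussF_eq_tsum (a b c z : ℝ) : gaussF a b c z = ∑' n, gaussTerm a b c z n := rfl

lemma gaussTerm_succ (a b c z : ℝ) (n : ℕ) :
    gaussTerm a b c z (n + 1) =
      (a + n) / (c + n) * ((b + n) / (1 + n)) * z * gaussTerm a b c z n := by
  simp only [gaussTerm, poch_succ, Nat.factorial_succ, pow_succ]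
  push_cast
  simp only [div_eq_mul_inv, mul_inv]
  ring

lemma gaussTerm_nonneg {a b c z : ℝ} (ha : 0 ≤ a) (hb : 0 ≤ b) (hc : 0 < c) (hz : 0 ≤ z)
    (n : ℕ) : 0 ≤ gaussTerm a b c z n := by
  have := poch_nonneg ha n
  have := poch_nonneg hb n
  have := poch_pos hc n
  unfold gaussTerm; positivity

lemma summable_abs_gaussTerm (a b c : ℝ) {z : ℝ} (hz : |z| < 1) :
    Summable fun n => |gaussTerm a b c z n| := by
  have hratio : Tendsto (fun n : ℕ => |(a + n) / (c + n) * ((b + n) / (1 + n)) * z|) atTop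
      (𝓝 |z|) := by
    have ha := tendsto_add_mul_div_add_mul_atTop_nhds a c (1 : ℝ) one_ne_zero
    have hb := tendsto_add_mul_div_add_mul_atTop_nhds b 1 (1 : ℝ) one_ne_zero
    simpa using ((ha.mul hb).mul_const z).abs
  obtain ⟨r, hzr, hr⟩ := exists_between hz
  refine summable_of_ratio_norm_eventually_le hr
    ((hratio.eventually (gt_mem_nhds hzr)).mono fun n hn => ?_)
  rw [Real.norm_eq_abs, abs_abs, Real.norm_eq_abs, abs_abs, gaussTerm_succ, abs_mul]
  exact mul_le_mul_of_nonneg_right hn.le (abs_nonneg _)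

noncomputable def appellTerm (a b1 b2 c1 c2 x y : ℝ) (p : ℕ × ℕ) : ℝ :=
  poch a (p.1 + p.2) * poch b1 p.1 * poch b2 p.2 /
    (poch c1 p.1 * poch c2 p.2 * p.1 ! * p.2 !) * x ^ p.1 * y ^ p.2

lemma choose_mul_pow_mul_pow_le {s t : ℝ} (hs : 0 ≤ s) (ht : 0 ≤ t) (m n : ℕ) :
    (m + n).choose m * s ^ m * t ^ n ≤ (s + t) ^ (m + n) := by
  have hm : m ∈ Finset.range (m + n + 1) := Finset.mem_range.2 (by omega)
  rw [add_pow]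
  refine le_of_eq_of_le ?_ (Finset.single_le_sum (fun k _ => by positivity) hm)
  rw [Nat.add_sub_cancel_left]
  ring

lemma appellTerm_le_gaussTerm_mul {a b1 b2 c1 c2 s t : ℝ} (ha : 0 ≤ a) (hb1 : 0 ≤ b1)
    (hb2 : 0 ≤ b2) (hc1 : 0 < c1) (hc2 : 0 < c2) (hs : 0 ≤ s) (ht : 0 ≤ t) (p : ℕ × ℕ) :
    appellTerm a b1 b2 c1 c2 s t p ≤
      gaussTerm (max a 1) b1 c1 (s + t) p.1 * gaussTerm (max a 1) b2 c2 (s + t) p.2 := by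
  obtain ⟨m, n⟩ := p
  have hpoch : poch a (m + n) ≤ (m + n).choose m * poch (max a 1) m * poch (max a 1) n :=
    (poch_le_poch ha (le_max_left _ _) _).trans (poch_add_le_choose_mul (le_max_right _ _) m n)
  have := poch_nonneg (ha.trans (le_max_left a 1)) m
  have := poch_nonneg (ha.trans (le_max_left a 1)) n
  have := poch_nonneg hb1 m
  have := poch_nonneg hb2 n
  have := poch_pos hc1 m
  have := poch_pos hc2 n
  calc appellTerm a b1 b2 c1 c2 s t (m, n)
      = poch a (m + n) * (poch b1 m * poch b2 n / (poch c1 m * poch c2 n * m ! * n !) *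
          (s ^ m * t ^ n)) := by unfold appellTerm; ring
    _ ≤ (m + n).choose m * poch (max a 1) m * poch (max a 1) n *
          (poch b1 m * poch b2 n / (poch c1 m * poch c2 n * m ! * n !) * (s ^ m * t ^ n)) := by
        gcongr
    _ = poch (max a 1) m * poch (max a 1) n *
          (poch b1 m * poch b2 n / (poch c1 m * poch c2 n * m ! * n !)) *
          ((m + n).choose m * s ^ m * t ^ n) := by ring
    _ ≤ poch (max a 1) m * poch (max a 1) n *
          (poch b1 m * poch b2 n / (poch c1 m * poch c2 n * m ! * n !)) * (s + t) ^ (m + n) := by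
        gcongr; exact choose_mul_pow_mul_pow_le hs ht m n
    _ = _ := by unfold gaussTerm; rw [pow_add]; ring

lemma summable_appellTerm {a b1 b2 c1 c2 s t : ℝ} (ha : 0 ≤ a) (hb1 : 0 ≤ b1) (hb2 : 0 ≤ b2)
    (hc1 : 0 < c1) (hc2 : 0 < c2) (hs : 0 ≤ s) (ht : 0 ≤ t) (hst : s + t < 1) :
    Summable (appellTerm a b1 b2 c1 c2 s t) := by
  have ha' : 0 ≤ max a 1 := ha.trans (le_max_left a 1)
  have hst' : |s + t| < 1 := by rwa [abs_of_nonneg (add_nonneg hs ht)]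
  have hg1 := gaussTerm_nonneg ha' hb1 hc1 (add_nonneg hs ht)
  have hg2 := gaussTerm_nonneg ha' hb2 hc2 (add_nonneg hs ht)
  refine Summable.of_nonneg_of_le (fun p => ?_)
    (appellTerm_le_gaussTerm_mul ha hb1 hb2 hc1 hc2 hs ht) (Summable.mul_of_nonneg ?_ ?_ hg1 hg2)
  · obtain ⟨m, n⟩ := p
    have := poch_nonneg ha (m + n)
    have := poch_nonneg hb1 m
    have := poch_nonneg hb2 n
    have := poch_pos hc1 m
    have := poch_pos hc2 n
    unfold appellTerm; positivity
  · simpa only [abs_of_nonneg (hg1 _)] using summable_abs_gaussTerm (max a 1) b1 c1 hst'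
  · simpa only [abs_of_nonneg (hg2 _)] using summable_abs_gaussTerm (max a 1) b2 c2 hst'

noncomputable def expansionCoeff (a b1 b2 c1 c2 x y : ℝ) (i : ℕ) : ℝ :=
  poch a i * poch b1 i * poch b2 i / (poch c1 i * poch c2 i * i !) * x ^ i * y ^ i

noncomputable def expansionTerm (a b1 b2 c1 c2 x y : ℝ) (q : ℕ × ℕ × ℕ) : ℝ :=
  expansionCoeff a b1 b2 c1 c2 x y q.1 *
    (gaussTerm (a + q.1) (b1 + q.1) (c1 + q.1) x q.2.1 *
      gaussTerm (a + q.1) (b2 + q.1) (c2 + q.1) y q.2.2)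

/-- `appellTerm (M, N)` with `(a)_(M+N) = (a)_M (a + M)_N` and `(a + M)_N` expanded by Newton's
forward-difference formula; the summand `i` equals `expansionTerm (i, M - i, N - i)`. -/
noncomputable def splitTerm (a b1 b2 c1 c2 x y : ℝ) (p : (ℕ × ℕ) × ℕ) : ℝ :=
  (p.1.1.choose p.2 * p.1.2.descFactorial p.2 : ℝ) * poch (a + p.2) (p.1.2 - p.2) *
    (poch a p.1.1 * poch b1 p.1.1 * poch b2 p.1.2 /
      (poch c1 p.1.1 * poch c2 p.1.2 * p.1.1 ! * p.1.2 !) * x ^ p.1.1 * y ^ p.1.2)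

def splitIndex (q : ℕ × ℕ × ℕ) : (ℕ × ℕ) × ℕ := ((q.1 + q.2.1, q.1 + q.2.2), q.1)

section splitTerm

variable {a b1 b2 c1 c2 x y : ℝ}

lemma splitTerm_eq_zero {M N i : ℕ} (h : M < i ∨ N < i) :
    splitTerm a b1 b2 c1 c2 x y ((M, N), i) = 0 := by
  rcases h with h | h
  · simp [splitTerm, Nat.choose_eq_zero_of_lt h]
  · simp [splitTerm, Nat.descFactorial_eq_zero_iff_lt.2 h]

lemma hasSum_splitTerm (p : ℕ × ℕ) :
    HasSum (fun i => splitTerm a b1 b2 c1 c2 x y (p, i)) (appellTerm a b1 b2 c1 c2 x y p) := by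
  have hsum : ∑ i ∈ Finset.range (p.1 + 1), splitTerm a b1 b2 c1 c2 x y (p, i) =
      appellTerm a b1 b2 c1 c2 x y p := by
    simp only [splitTerm, ← Finset.sum_mul, sum_choose_mul_descFactorial_mul_poch]
    unfold appellTerm
    rw [poch_add]
    ring
  rw [← hsum]
  exact hasSum_sum_of_ne_finset_zero fun i hi => splitTerm_eq_zero (Or.inl (by simpa using hi))

lemma splitTerm_splitIndex (q : ℕ × ℕ × ℕ) :
    splitTerm a b1 b2 c1 c2 x y (splitIndex q) = expansionTerm a b1 b2 c1 c2 x y q := by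
  obtain ⟨i, m, n⟩ := q
  have hm : ((i + m)! : ℝ) = (i + m).choose i * i ! * m ! := by
    rw [Nat.choose_symm_add]; exact_mod_cast (Nat.add_choose_mul_factorial_mul_factorial i m).symm
  have hn : ((i + n)! : ℝ) = n ! * (i + n).descFactorial i := by
    have := Nat.factorial_mul_descFactorial (Nat.le_add_right i n)
    rw [Nat.add_sub_cancel_left] at this
    exact_mod_cast this.symm
  have hC : ((i + m).choose i : ℝ) ≠ 0 := by
    exact_mod_cast (Nat.choose_pos (Nat.le_add_right i m)).ne'
  have hD : ((i + n).descFactorial i : ℝ) ≠ 0 := by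
    exact_mod_cast Nat.descFactorial_eq_zero_iff_lt.not.2 (Nat.not_lt.2 (Nat.le_add_right i n))
  calc splitTerm a b1 b2 c1 c2 x y ((i + m, i + n), i)
      = ((i + m).choose i * ((i + m).choose i : ℝ)⁻¹) *
          ((i + n).descFactorial i * ((i + n).descFactorial i : ℝ)⁻¹) *
          expansionTerm a b1 b2 c1 c2 x y (i, m, n) := by
        simp only [splitTerm, expansionTerm, expansionCoeff, gaussTerm, Nat.add_sub_cancel_left,
          poch_add, pow_add, hm, hn]
        ring
    _ = _ := by rw [mul_inv_cancel₀ hC, mul_inv_cancel₀ hD, one_mul, one_mul]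

lemma splitTerm_nonneg (ha : 0 ≤ a) (hb1 : 0 ≤ b1) (hb2 : 0 ≤ b2) (hc1 : 0 < c1)
    (hc2 : 0 < c2) (hx : 0 ≤ x) (hy : 0 ≤ y) (p : (ℕ × ℕ) × ℕ) :
    0 ≤ splitTerm a b1 b2 c1 c2 x y p := by
  obtain ⟨⟨M, N⟩, i⟩ := p
  have := poch_nonneg (by positivity : 0 ≤ a + i) (N - i)
  have := poch_nonneg ha M
  have := poch_nonneg hb1 M
  have := poch_nonneg hb2 N
  have := poch_pos hc1 M
  have := poch_pos hc2 N
  unfold splitTerm; positivity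

lemma abs_splitTerm_le (hc1 : 0 < c1) (hc2 : 0 < c2) (p : (ℕ × ℕ) × ℕ) :
    |splitTerm a b1 b2 c1 c2 x y p| ≤ splitTerm |a| |b1| |b2| c1 c2 |x| |y| p := by
  obtain ⟨⟨M, N⟩, i⟩ := p
  have := poch_pos hc1 M
  have := poch_pos hc2 N
  have hD : 0 < poch c1 M * poch c2 N * M ! * N ! := by positivity
  have hP : |poch (a + i) (N - i)| ≤ poch (|a| + i) (N - i) :=
    (abs_poch_le _ _).trans (poch_le_poch (abs_nonneg _)
      ((abs_add_le _ _).trans_eq (by rw [Nat.abs_cast])) _)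
  have := poch_nonneg (by positivity : 0 ≤ |a| + i) (N - i)
  have := poch_nonneg (abs_nonneg a) M
  have := poch_nonneg (abs_nonneg b1) M
  simp only [splitTerm, abs_mul, abs_div, abs_pow, abs_of_pos hD, Nat.abs_cast]
  gcongr <;> exact abs_poch_le _ _

end splitTerm

lemma abs_tsum_le_tsum_abs {ι : Type*} {f : ι → ℝ} (hf : Summable fun i => |f i|) :
    |∑' i, f i| ≤ ∑' i, |f i| := by
  simpa only [Real.norm_eq_abs] using
    norm_tsum_le_tsum_norm (f := f) (by simpa only [Real.norm_eq_abs] using hf)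

section rearrangement

variable (a b1 b2 : ℝ) {c1 c2 x y : ℝ}

lemma summable_abs_splitTerm (hc1 : 0 < c1) (hc2 : 0 < c2) (hxy : |x| + |y| < 1) :
    Summable fun p => |splitTerm a b1 b2 c1 c2 x y p| := by
  have hmajor : Summable (splitTerm |a| |b1| |b2| c1 c2 |x| |y|) :=
    (summable_prod_of_nonneg (splitTerm_nonneg (abs_nonneg a) (abs_nonneg b1) (abs_nonneg b2)
      hc1 hc2 (abs_nonneg x) (abs_nonneg y))).2
      ⟨fun p => (hasSum_splitTerm p).summable,
        (summable_appellTerm (abs_nonneg a) (abs_nonneg b1) (abs_nonneg b2) hc1 hc2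
          (abs_nonneg x) (abs_nonneg y) hxy).congr fun p => (hasSum_splitTerm p).tsum_eq.symm⟩
  exact hmajor.of_nonneg_of_le (fun _ => abs_nonneg _) (abs_splitTerm_le hc1 hc2)

lemma summable_abs_appellTerm (hc1 : 0 < c1) (hc2 : 0 < c2) (hxy : |x| + |y| < 1) :
    Summable fun p => |appellTerm a b1 b2 c1 c2 x y p| := by
  refine (summable_abs_splitTerm a b1 b2 hc1 hc2 hxy).prod.of_nonneg_of_le (fun _ => abs_nonneg _)
    fun p => ?_
  rw [← (hasSum_splitTerm p).tsum_eq]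
  exact abs_tsum_le_tsum_abs ((summable_abs_splitTerm a b1 b2 hc1 hc2 hxy).prod_factor p)

lemma splitIndex_injective : Function.Injective splitIndex := by
  rintro ⟨i, m, n⟩ ⟨i', m', n'⟩ h
  simp only [splitIndex, Prod.mk.injEq] at h ⊢
  omega

lemma support_splitTerm_subset :
    Function.support (splitTerm a b1 b2 c1 c2 x y) ⊆ Set.range splitIndex := by
  rintro ⟨⟨M, N⟩, i⟩ hp
  by_cases h : M < i ∨ N < i
  · exact absurd (splitTerm_eq_zero h) hp
  · exact ⟨(i, M - i, N - i), by simp only [splitIndex, Prod.mk.injEq, and_true]; omega⟩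

lemma summable_abs_expansionTerm (hc1 : 0 < c1) (hc2 : 0 < c2) (hxy : |x| + |y| < 1) :
    Summable fun q => |expansionTerm a b1 b2 c1 c2 x y q| := by
  refine ((summable_abs_splitTerm a b1 b2 hc1 hc2 hxy).comp_injective
    splitIndex_injective).congr fun q => ?_
  rw [Function.comp_apply, splitTerm_splitIndex]

lemma tsum_expansionTerm (hc1 : 0 < c1) (hc2 : 0 < c2) (hxy : |x| + |y| < 1) :
    ∑' q, expansionTerm a b1 b2 c1 c2 x y q = appellF2 a b1 b2 c1 c2 x y := by
  calc ∑' q, expansionTerm a b1 b2 c1 c2 x y q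
      = ∑' q, splitTerm a b1 b2 c1 c2 x y (splitIndex q) :=
        tsum_congr fun q => (splitTerm_splitIndex q).symm
    _ = ∑' p, splitTerm a b1 b2 c1 c2 x y p :=
        splitIndex_injective.tsum_eq (support_splitTerm_subset a b1 b2)
    _ = ∑' p, ∑' i, splitTerm a b1 b2 c1 c2 x y (p, i) :=
        (summable_abs_splitTerm a b1 b2 hc1 hc2 hxy).of_abs.tsum_prod' fun p =>
          (hasSum_splitTerm p).summable
    _ = appellF2 a b1 b2 c1 c2 x y := tsum_congr fun p => (hasSum_splitTerm p).tsum_eq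

lemma tsum_expansionTerm_fiber (hx : |x| < 1) (hy : |y| < 1) (i : ℕ) :
    ∑' mn : ℕ × ℕ, expansionTerm a b1 b2 c1 c2 x y (i, mn) =
      expansionCoeff a b1 b2 c1 c2 x y i * gaussF (a + i) (b1 + i) (c1 + i) x *
        gaussF (a + i) (b2 + i) (c2 + i) y := by
  have h1 := summable_abs_gaussTerm (a + i) (b1 + i) (c1 + i) hx
  have h2 := summable_abs_gaussTerm (a + i) (b2 + i) (c2 + i) hy
  simp only [← Real.norm_eq_abs] at h1 h2
  rw [mul_assoc, gaussF_eq_tsum, gaussF_eq_tsum, tsum_mul_tsum_of_summable_norm h1 h2,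
    ← tsum_mul_left]
  rfl

end rearrangement

theorem appellF2_expansion (a b1 b2 c1 c2 : ℝ) (hc1 : 0 < c1) (hc2 : 0 < c2)
    (x y : ℝ) (hxy : |x| + |y| < 1) :
    Summable (fun p : ℕ × ℕ => |poch a (p.1 + p.2) * poch b1 p.1 * poch b2 p.2 /
      (poch c1 p.1 * poch c2 p.2 * (Nat.factorial p.1 : ℝ) * (Nat.factorial p.2 : ℝ)) *
      x ^ p.1 * y ^ p.2|) ∧
    (∀ i : ℕ, Summable (fun n : ℕ => |poch (a + i) n * poch (b1 + i) n /
      (poch (c1 + i) n * (Nat.factorial n : ℝ)) * x ^ n|)) ∧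
    (∀ i : ℕ, Summable (fun n : ℕ => |poch (a + i) n * poch (b2 + i) n /
      (poch (c2 + i) n * (Nat.factorial n : ℝ)) * y ^ n|)) ∧
    Summable (fun i : ℕ => |poch a i * poch b1 i * poch b2 i /
      (poch c1 i * poch c2 i * (Nat.factorial i : ℝ)) * x ^ i * y ^ i *
      gaussF (a + i) (b1 + i) (c1 + i) x * gaussF (a + i) (b2 + i) (c2 + i) y|) ∧
    appellF2 a b1 b2 c1 c2 x y =
      ∑' i : ℕ, poch a i * poch b1 i * poch b2 i /
        (poch c1 i * poch c2 i * (Nat.factorial i : ℝ)) * x ^ i * y ^ i *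
        gaussF (a + i) (b1 + i) (c1 + i) x * gaussF (a + i) (b2 + i) (c2 + i) y := by
  have hx : |x| < 1 := by linarith [abs_nonneg y]
  have hy : |y| < 1 := by linarith [abs_nonneg x]
  have hT := summable_abs_expansionTerm a b1 b2 hc1 hc2 hxy
  refine ⟨summable_abs_appellTerm a b1 b2 hc1 hc2 hxy,
    fun i => summable_abs_gaussTerm _ _ _ hx, fun i => summable_abs_gaussTerm _ _ _ hy, ?_, ?_⟩
  · refine hT.prod.of_nonneg_of_le (fun _ => abs_nonneg _) fun i => ?_
    have := abs_tsum_le_tsum_abs (hT.prod_factor i)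
    rwa [tsum_expansionTerm_fiber a b1 b2 hx hy i] at this
  · rw [← tsum_expansionTerm a b1 b2 hc1 hc2 hxy,
      hT.of_abs.tsum_prod' fun i => (hT.prod_factor i).of_abs]
    exact tsum_congr (tsum_expansionTerm_fiber a b1 b2 hx hy)
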